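/- Let x ∈ ℝⁿ with f(x) ≠ 0 and suppose the flow S_t x is defined and f(S_t x) ≠ 0 for all t ≥ 0. Let M be a C¹ function on a neighborhood of the forward orbit of x with values in the symmetric n×n matrices, let φ₁ be a solution of the variational equation φ̇(t) = Df(S_t x)φ(t), and set φ₀(t) := f(S_t x)/‖f(S_t x)‖². Then for all t ≥ 0: d/dt [φ₁(t)^T P_{S_t x}^T M(S_t x) φ₀(t)] = φ₁(t)^T P_{S_t x}^T (LM(S_t x)) φ₀(t), and d/dt [φ₀(t)^T M(S_t x) P_{S_t x} φ₁(t)] = φ₀(t)^T (LM(S_t x)) P_{S_t x} φ₁(t). -/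

import Mathlib

open Matrix Set Filter MeasureTheory

noncomputable def vecEnorm {n : ℕ} (v : Fin n → ℝ) : ℝ := Real.sqrt (∑ i, v i ^ 2)

noncomputable def opn {n : ℕ} (A : Matrix (Fin n) (Fin n) ℝ) : ℝ :=
  ‖Matrix.toEuclideanCLM (𝕜 := ℝ) A‖

noncomputable def Pm {n : ℕ} (f : (Fin n → ℝ) → Fin n → ℝ) (x : Fin n → ℝ) :
    Matrix (Fin n) (Fin n) ℝ :=
  1 - (vecEnorm (f x) ^ 2)⁻¹ • Matrix.vecMulVec (f x) (f x)

/-- The differential operator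
`LM(x) = M′(x) + Df(x)ᵀM(x) + M(x)Df(x) - M(x)f(x)f(x)ᵀ(Df(x)+Df(x)ᵀ)/‖f(x)‖²
  - (Df(x)+Df(x)ᵀ)f(x)f(x)ᵀM(x)/‖f(x)‖²`,
where the orbital derivative `M′(x)` has entries `∇M_ij(x) ⋅ f(x)`. -/
noncomputable def LMop {n : ℕ} (f : (Fin n → ℝ) → Fin n → ℝ)
    (Df M : (Fin n → ℝ) → Matrix (Fin n) (Fin n) ℝ) (x : Fin n → ℝ) :
    Matrix (Fin n) (Fin n) ℝ :=
  (Matrix.of fun i j => fderiv ℝ (fun y => M y i j) x (f x))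
    + (Df x)ᵀ * M x + M x * Df x
    - (vecEnorm (f x) ^ 2)⁻¹ • (M x * Matrix.vecMulVec (f x) (f x) * (Df x + (Df x)ᵀ))
    - (vecEnorm (f x) ^ 2)⁻¹ • ((Df x + (Df x)ᵀ) * Matrix.vecMulVec (f x) (f x) * M x)

/-!
With `v = f(S_t x)` and `φ₀ = v/‖v‖²` one has `Pᵀ = I - v vᵀ/‖v‖²`, so
`φ₁ᵀ Pᵀ M φ₀ = φ₁ᵀ M φ₀ - (φ₁ ⬝ v)(φ₀ᵀ M φ₀)`: a combination of bilinear forms in curves with known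
derivatives, namely `φ₁' = Df φ₁`, `v' = Df v`, `(M ∘ S)' = M′` and
`φ₀' = Df v/‖v‖² - 2 (vᵀ Df v) v/‖v‖⁴`. The product rule and an expansion of `φ₁ᵀ Pᵀ LM φ₀` in the
same way give (4.3). Since `M`, and hence `M′` and `LM`, are symmetric near the orbit, (4.4) is the
transpose of (4.3).
-/

open scoped Topology

section CurveCalculus

variable {ι κ : Type*} [Fintype ι] {s : Set ℝ} {t : ℝ}

theorem HasDerivWithinAt.dotProduct {u v : ℝ → ι → ℝ} {u' v' : ι → ℝ}
    (hu : HasDerivWithinAt u u' s t) (hv : HasDerivWithinAt v v' s t) :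
    HasDerivWithinAt (fun τ => u τ ⬝ᵥ v τ) (u' ⬝ᵥ v t + u t ⬝ᵥ v') s t :=
  (HasDerivWithinAt.fun_sum (u := Finset.univ) fun i _ =>
    (hasDerivWithinAt_pi.1 hu i).fun_mul (hasDerivWithinAt_pi.1 hv i)).congr_deriv
      Finset.sum_add_distrib

theorem HasDerivWithinAt.mulVec {A : ℝ → Matrix κ ι ℝ} {A' : Matrix κ ι ℝ}
    {v : ℝ → ι → ℝ} {v' : ι → ℝ}
    (hA : ∀ i j, HasDerivWithinAt (fun τ => A τ i j) (A' i j) s t)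
    (hv : HasDerivWithinAt v v' s t) :
    HasDerivWithinAt (fun τ => A τ *ᵥ v τ) (A' *ᵥ v t + A t *ᵥ v') s t :=
  hasDerivWithinAt_pi.2 fun i => (hasDerivWithinAt_pi.2 (hA i)).dotProduct hv

theorem HasDerivWithinAt.inv_dotProduct_self_smul {v : ℝ → ι → ℝ} {v' : ι → ℝ}
    (hv : HasDerivWithinAt v v' s t) (hvt : v t ≠ 0) :
    HasDerivWithinAt (fun τ => (v τ ⬝ᵥ v τ)⁻¹ • v τ)
      ((v t ⬝ᵥ v t)⁻¹ • v' - (2 * (v t ⬝ᵥ v') / (v t ⬝ᵥ v t) ^ 2) • v t) s t := by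
  have hν : v t ⬝ᵥ v t ≠ 0 := fun h => hvt (dotProduct_self_eq_zero.1 h)
  refine (((hv.dotProduct hv).inv hν).fun_smul hv).congr_deriv ?_
  rw [dotProduct_comm v' (v t)]
  module

end CurveCalculus

section ProjectedForm

variable {n : ℕ}

theorem vecEnorm_sq (v : Fin n → ℝ) : vecEnorm v ^ 2 = v ⬝ᵥ v := by
  rw [vecEnorm, Real.sq_sqrt (Finset.sum_nonneg fun i _ => sq_nonneg (v i))]
  simp only [dotProduct, sq]

theorem dotProduct_projection_mul_mulVec {ι : Type*} [Fintype ι] [DecidableEq ι]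
    (u v w : ι → ℝ) (A : Matrix ι ι ℝ) (c : ℝ) :
    u ⬝ᵥ ((1 - c • vecMulVec v v)ᵀ * A) *ᵥ w
      = u ⬝ᵥ A *ᵥ w - (u ⬝ᵥ v) * ((c • v) ⬝ᵥ A *ᵥ w) := by
  rw [← Matrix.mulVec_mulVec, dotProduct_transpose_mulVec, Matrix.sub_mulVec, Matrix.one_mulVec,
    Matrix.smul_mulVec, vecMulVec_mulVec]
  simp only [op_smul_eq_smul, dotProduct_sub, dotProduct_smul, smul_dotProduct, smul_eq_mul]
  rw [dotProduct_comm, dotProduct_comm (A *ᵥ w), dotProduct_comm v u]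
  ring

/-- The left side is what the product rule gives for `p ⬝ A φ - (p ⬝ v)(φ ⬝ A φ)` along curves
with `p' = D p`, `v' = D v` and `A` moving with velocity `A'`, so that `φ = v/‖v‖²` moves with
velocity `φ'`. -/
theorem projected_form_deriv_eq {ι : Type*} [Fintype ι] (p v : ι → ℝ) (D A A' : Matrix ι ι ℝ)
    (hv : v ⬝ᵥ v ≠ 0) :
    let ν := v ⬝ᵥ v
    let φ := ν⁻¹ • v
    let φ' := ν⁻¹ • D *ᵥ v - (2 * (v ⬝ᵥ D *ᵥ v) / ν ^ 2) • v
    let L := A' + Dᵀ * A + A * D - ν⁻¹ • (A * vecMulVec v v * (D + Dᵀ))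
      - ν⁻¹ • ((D + Dᵀ) * vecMulVec v v * A)
    (D *ᵥ p) ⬝ᵥ A *ᵥ φ + p ⬝ᵥ (A' *ᵥ φ + A *ᵥ φ')
      - (((D *ᵥ p) ⬝ᵥ v + p ⬝ᵥ D *ᵥ v) * (φ ⬝ᵥ A *ᵥ φ)
        + (p ⬝ᵥ v) * (φ' ⬝ᵥ A *ᵥ φ + φ ⬝ᵥ (A' *ᵥ φ + A *ᵥ φ')))
      = p ⬝ᵥ L *ᵥ φ - (p ⬝ᵥ v) * (φ ⬝ᵥ L *ᵥ φ) := by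
  intro ν φ φ' L
  simp only [ν, φ, φ', L, Matrix.add_mulVec, Matrix.sub_mulVec, Matrix.smul_mulVec,
    ← Matrix.mulVec_mulVec, vecMulVec_mulVec, op_smul_eq_smul, Matrix.mulVec_add,
    Matrix.mulVec_sub, Matrix.mulVec_smul, dotProduct_add, dotProduct_sub, dotProduct_smul,
    sub_dotProduct, smul_dotProduct, smul_eq_mul, dotProduct_transpose_mulVec]
  simp only [dotProduct_comm (A *ᵥ v), dotProduct_comm v (D *ᵥ p)]
  field_simp
  ring

theorem hasDerivWithinAt_projected_form {f : (Fin n → ℝ) → Fin n → ℝ}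
    {Df M : (Fin n → ℝ) → Matrix (Fin n) (Fin n) ℝ} {g φ₀ φ₁ : ℝ → Fin n → ℝ} {s : Set ℝ} {t : ℝ}
    (hDf : HasFDerivAt f (LinearMap.toContinuousLinearMap ((Df (g t)).mulVecLin)) (g t))
    (hg : HasDerivWithinAt g (f (g t)) s t) (hfg : f (g t) ≠ 0)
    (hM : ∀ i j, DifferentiableAt ℝ (fun y => M y i j) (g t))
    (hφ₁ : HasDerivWithinAt φ₁ (Df (g t) *ᵥ φ₁ t) s t)
    (hφ₀ : ∀ τ, φ₀ τ = (vecEnorm (f (g τ)) ^ 2)⁻¹ • f (g τ)) :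
    HasDerivWithinAt (fun τ => φ₁ τ ⬝ᵥ ((Pm f (g τ))ᵀ * M (g τ)) *ᵥ φ₀ τ)
      (φ₁ t ⬝ᵥ ((Pm f (g t))ᵀ * LMop f Df M (g t)) *ᵥ φ₀ t) s t := by
  have hv : HasDerivWithinAt (fun τ => f (g τ)) (Df (g t) *ᵥ f (g t)) s t :=
    hDf.comp_hasDerivWithinAt t hg
  have hMg : ∀ i j, HasDerivWithinAt (fun τ => M (g τ) i j)
      (Matrix.of (fun i j => fderiv ℝ (fun y => M y i j) (g t) (f (g t))) i j) s t := fun i j =>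
    (hM i j).hasFDerivAt.comp_hasDerivWithinAt t hg
  have hφ₀' := hv.inv_dotProduct_self_smul hfg
  simp only [← vecEnorm_sq, ← hφ₀] at hφ₀'
  have hform : ∀ τ, φ₁ τ ⬝ᵥ ((Pm f (g τ))ᵀ * M (g τ)) *ᵥ φ₀ τ
      = φ₁ τ ⬝ᵥ M (g τ) *ᵥ φ₀ τ - (φ₁ τ ⬝ᵥ f (g τ)) * (φ₀ τ ⬝ᵥ M (g τ) *ᵥ φ₀ τ) := by
    intro τ
    rw [Pm, dotProduct_projection_mul_mulVec, ← hφ₀]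
  simp only [hform]
  have hMφ₀ := HasDerivWithinAt.mulVec hMg hφ₀'
  refine ((hφ₁.dotProduct hMφ₀).sub ((hφ₁.dotProduct hv).mul
    (hφ₀'.dotProduct hMφ₀))).congr_deriv ?_
  rw [Pm, dotProduct_projection_mul_mulVec, ← hφ₀, hφ₀ t, LMop]
  simp only [vecEnorm_sq]
  exact projected_form_deriv_eq _ _ _ _ _ fun h => hfg (dotProduct_self_eq_zero.1 h)

theorem LMop_transpose {f : (Fin n → ℝ) → Fin n → ℝ}
    {Df M : (Fin n → ℝ) → Matrix (Fin n) (Fin n) ℝ} {x : Fin n → ℝ}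
    (hM : ∀ᶠ y in 𝓝 x, (M y)ᵀ = M y) :
    (LMop f Df M x)ᵀ = LMop f Df M x := by
  have horbital : (Matrix.of fun i j => fderiv ℝ (fun y => M y i j) x (f x))ᵀ
      = Matrix.of fun i j => fderiv ℝ (fun y => M y i j) x (f x) := by
    ext i j
    have hMji : (fun y => M y j i) =ᶠ[𝓝 x] fun y => M y i j :=
      hM.mono fun y hy => congrFun (congrFun hy i) j
    simp only [Matrix.transpose_apply, Matrix.of_apply, hMji.fderiv_eq]
  simp only [LMop, Matrix.transpose_sub, Matrix.transpose_add, Matrix.transpose_smul,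
    Matrix.transpose_mul, Matrix.transpose_transpose, transpose_vecMulVec, horbital,
    hM.self_of_nhds, Matrix.mul_assoc]
  rw [add_comm (Df x)ᵀ]
  abel

end ProjectedForm

theorem stmt10_general {n : ℕ} (f : (Fin n → ℝ) → Fin n → ℝ)
    (Df : (Fin n → ℝ) → Matrix (Fin n) (Fin n) ℝ)
    (hDf : ∀ y, HasFDerivAt f (LinearMap.toContinuousLinearMap ((Df y).mulVecLin)) y)
    -- `g t = S_t x` is the forward trajectory through `x`
    (g : ℝ → Fin n → ℝ)
    (hg : ∀ t ≥ (0:ℝ), HasDerivWithinAt g (f (g t)) (Set.Ici 0) t)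
    (hfg : ∀ t ≥ (0:ℝ), f (g t) ≠ 0)
    -- `M` is C¹ and symmetric-matrix-valued on an open neighborhood of the forward orbit
    (V : Set (Fin n → ℝ)) (hV : IsOpen V) (hgV : ∀ t ≥ (0:ℝ), g t ∈ V)
    (M : (Fin n → ℝ) → Matrix (Fin n) (Fin n) ℝ)
    (hM : ∀ i j, ContDiffOn ℝ 1 (fun y => M y i j) V)
    (hMsym : ∀ y ∈ V, (M y)ᵀ = M y)
    -- `φ₁` is a solution of the variational equation
    (φ₁ : ℝ → Fin n → ℝ)
    (hφ₁ : ∀ t ≥ (0:ℝ), HasDerivWithinAt φ₁ ((Df (g t)).mulVec (φ₁ t)) (Set.Ici 0) t)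
    -- `φ₀ t = f(S_t x)/‖f(S_t x)‖²`
    (φ₀ : ℝ → Fin n → ℝ) (hφ₀ : ∀ t, φ₀ t = (vecEnorm (f (g t)) ^ 2)⁻¹ • f (g t)) :
    ∀ t ≥ (0:ℝ),
      HasDerivWithinAt
        (fun τ => φ₁ τ ⬝ᵥ ((Pm f (g τ))ᵀ * M (g τ)).mulVec (φ₀ τ))
        (φ₁ t ⬝ᵥ ((Pm f (g t))ᵀ * LMop f Df M (g t)).mulVec (φ₀ t))
        (Set.Ici 0) t ∧
      HasDerivWithinAt
        (fun τ => φ₀ τ ⬝ᵥ (M (g τ) * Pm f (g τ)).mulVec (φ₁ τ))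
        (φ₀ t ⬝ᵥ (LMop f Df M (g t) * Pm f (g t)).mulVec (φ₁ t))
        (Set.Ici 0) t := by
  intro t ht
  have hVt : V ∈ 𝓝 (g t) := hV.mem_nhds (hgV t ht)
  have hMt : ∀ i j, DifferentiableAt ℝ (fun y => M y i j) (g t) := fun i j =>
    ((hM i j).contDiffAt hVt).differentiableAt one_ne_zero
  have hprojected :=
    hasDerivWithinAt_projected_form (hDf (g t)) (hg t ht) (hfg t ht) hMt (hφ₁ t ht) hφ₀
  have hswap : ∀ τ ∈ Set.Ici (0:ℝ), φ₀ τ ⬝ᵥ (M (g τ) * Pm f (g τ)) *ᵥ φ₁ τ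
      = φ₁ τ ⬝ᵥ ((Pm f (g τ))ᵀ * M (g τ)) *ᵥ φ₀ τ := fun τ hτ => by
    rw [← dotProduct_transpose_mulVec, Matrix.transpose_mul, hMsym _ (hgV τ hτ)]
  refine ⟨hprojected, ?_⟩
  rw [← dotProduct_transpose_mulVec, Matrix.transpose_mul,
    LMop_transpose (eventually_of_mem hVt hMsym)]
  exact hprojected.congr hswap (hswap t ht)

/-- Lemma 4.1, equations (4.3) and (4.4): with
`φ₀(t) = f(S_t x)/‖f(S_t x)‖²` and `φ₁` a solution of the variational equation,
`d/dt [φ₁(t)ᵀ P_{S_t x}ᵀ M(S_t x) φ₀(t)] = φ₁(t)ᵀ P_{S_t x}ᵀ (LM(S_t x)) φ₀(t)` and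
`d/dt [φ₀(t)ᵀ M(S_t x) P_{S_t x} φ₁(t)] = φ₀(t)ᵀ (LM(S_t x)) P_{S_t x} φ₁(t)`. -/
theorem stmt10 {n : ℕ} (f : (Fin n → ℝ) → Fin n → ℝ)
    (Df : (Fin n → ℝ) → Matrix (Fin n) (Fin n) ℝ)
    (hf : ContDiff ℝ 1 f)
    (hDf : ∀ y, HasFDerivAt f (LinearMap.toContinuousLinearMap ((Df y).mulVecLin)) y)
    (x : Fin n → ℝ) (hfx : f x ≠ 0)
    -- `g t = S_t x` is the forward trajectory through `x`
    (g : ℝ → Fin n → ℝ) (hg0 : g 0 = x)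
    (hg : ∀ t ≥ (0:ℝ), HasDerivWithinAt g (f (g t)) (Set.Ici 0) t)
    (hfg : ∀ t ≥ (0:ℝ), f (g t) ≠ 0)
    -- `M` is C¹ and symmetric-matrix-valued on an open neighborhood of the forward orbit
    (V : Set (Fin n → ℝ)) (hV : IsOpen V) (hgV : ∀ t ≥ (0:ℝ), g t ∈ V)
    (M : (Fin n → ℝ) → Matrix (Fin n) (Fin n) ℝ)
    (hM : ∀ i j, ContDiffOn ℝ 1 (fun y => M y i j) V)
    (hMsym : ∀ y ∈ V, (M y)ᵀ = M y)
    -- `φ₁` is a solution of the variational equation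
    (φ₁ : ℝ → Fin n → ℝ)
    (hφ₁ : ∀ t ≥ (0:ℝ), HasDerivWithinAt φ₁ ((Df (g t)).mulVec (φ₁ t)) (Set.Ici 0) t)
    -- `φ₀ t = f(S_t x)/‖f(S_t x)‖²`
    (φ₀ : ℝ → Fin n → ℝ) (hφ₀ : ∀ t, φ₀ t = (vecEnorm (f (g t)) ^ 2)⁻¹ • f (g t)) :
    ∀ t ≥ (0:ℝ),
      HasDerivWithinAt
        (fun τ => φ₁ τ ⬝ᵥ ((Pm f (g τ))ᵀ * M (g τ)).mulVec (φ₀ τ))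
        (φ₁ t ⬝ᵥ ((Pm f (g t))ᵀ * LMop f Df M (g t)).mulVec (φ₀ t))
        (Set.Ici 0) t ∧
      HasDerivWithinAt
        (fun τ => φ₀ τ ⬝ᵥ (M (g τ) * Pm f (g τ)).mulVec (φ₁ τ))
        (φ₀ t ⬝ᵥ (LMop f Df M (g t) * Pm f (g t)).mulVec (φ₁ t))
        (Set.Ici 0) t :=
  stmt10_general f Df hDf g hg hfg V hV hgV M hM hMsym φ₁ hφ₁ φ₀ hφ₀
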